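/- arXiv:math/0502171 — 2 statements merged into one kernel-verified Lean document; each statement's English description precedes it below -/
import Mathlib

section
/- The cardinality of the degree class group Δ_X of a connected multigraph equals the number of spanning trees of the graph (Kirchhoff–Trent theorem / matrix-tree theorem restated for the degree class group). -/
open Matrix Finset

lemma index_eq_natAbs_det {ι : Type} [Fintype ι] [DecidableEq ι]
    (N : Submodule ℤ (ι → ℤ)) (e : (ι → ℤ) ≃ₗ[ℤ] N) :
    (LinearMap.det (N.subtype ∘ₗ (e : (ι → ℤ) →ₗ[ℤ] N))).natAbs = N.toAddSubgroup.index := by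
  classical
  obtain ⟨n, snf⟩ := N.smithNormalForm (Pi.basisFun ℤ ι)
  have hn : n = Fintype.card ι := by
    have h1 := Module.finrank_eq_card_basis snf.bN
    have h2 := Module.finrank_eq_card_basis (Pi.basisFun ℤ ι)
    have h3 := e.finrank_eq
    simp only [Fintype.card_fin] at h1
    omega
  rw [snf.toAddSubgroup_index_eq_ite, if_pos hn]
  simp only [Ideal.span_singleton_toAddSubgroup_eq_zmultiples, Int.index_zmultiples]
  let fe : Fin n ≃ ι :=
    Equiv.ofBijective snf.f ((Fintype.bijective_iff_injective_and_card _).mpr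
      ⟨snf.f.injective, by simp [hn]⟩)
  have hfe : ∀ j, snf.f (fe.symm j) = j := fun j => fe.apply_symm_apply j
  set bM := snf.bM
  let e' : (ι → ℤ) ≃ₗ[ℤ] N := bM.equiv (snf.bN.reindex fe) (Equiv.refl ι)
  have key : ∀ j, (N.subtype ∘ₗ (e' : (ι → ℤ) →ₗ[ℤ] N)) (bM j)
      = snf.a (fe.symm j) • bM j := by
    intro j
    have : (e' : (ι → ℤ) →ₗ[ℤ] N) (bM j) = snf.bN (fe.symm j) := by
      simp [e', Module.Basis.equiv_apply]
    simp only [LinearMap.comp_apply, this, Submodule.coe_subtype]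
    rw [snf.snf (fe.symm j), hfe]
  have hmat : LinearMap.toMatrix bM bM (N.subtype ∘ₗ (e' : (ι → ℤ) →ₗ[ℤ] N))
      = Matrix.diagonal (fun j => snf.a (fe.symm j)) := by
    ext i j
    rw [LinearMap.toMatrix_apply, key j]
    simp only [_root_.map_smul, Module.Basis.repr_self, Finsupp.smul_single, smul_eq_mul, mul_one]
    by_cases h : i = j
    · subst h; simp
    · rw [Finsupp.single_eq_of_ne' (Ne.symm h), Matrix.diagonal_apply_ne _ h]
  calc (LinearMap.det (N.subtype ∘ₗ (e : (ι → ℤ) →ₗ[ℤ] N))).natAbs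
      = (LinearMap.det (N.subtype ∘ₗ (e' : (ι → ℤ) →ₗ[ℤ] N))).natAbs :=
        Int.natAbs_eq_iff_associated.mpr (LinearMap.associated_det_comp_equiv _ _ _)
    _ = (Matrix.det (LinearMap.toMatrix bM bM (N.subtype ∘ₗ (e' : (ι → ℤ) →ₗ[ℤ] N)))).natAbs := by
        rw [LinearMap.det_toMatrix]
    _ = (∏ j, snf.a (fe.symm j)).natAbs := by rw [hmat, Matrix.det_diagonal]
    _ = ∏ i, (snf.a i).natAbs := by
        rw [Fintype.prod_equiv fe.symm (fun j => snf.a (fe.symm j)) (fun i => snf.a i)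
          (fun x => rfl)]
        exact map_prod Int.natAbsHom _ _

lemma index_span_cols {ι : Type} [Fintype ι] [DecidableEq ι] (M : Matrix ι ι ℤ) :
    (Submodule.span ℤ (Set.range Mᵀ)).toAddSubgroup.index = M.det.natAbs := by
  classical
  rw [show Set.range Mᵀ = Set.range M.col from rfl, ← Matrix.range_mulVecLin]
  by_cases hdet : M.det = 0
  · rw [hdet, Int.natAbs_zero]
    by_contra h
    obtain ⟨e⟩ := Int.submodule_toAddSubgroup_index_ne_zero_iff.mp h
    have hsurj : Function.Surjective
        ((e : (LinearMap.range M.mulVecLin) →ₗ[ℤ] (ι → ℤ)) ∘ₗ M.mulVecLin.rangeRestrict) :=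
      e.surjective.comp M.mulVecLin.surjective_rangeRestrict
    have hinj := IsNoetherian.injective_of_surjective_endomorphism _ hsurj
    have hinj2 : Function.Injective M.mulVecLin := by
      intro v w hvw
      apply hinj
      simp only [LinearMap.comp_apply]
      congr 1
      exact Subtype.ext (by simpa using hvw)
    obtain ⟨v, hv0, hv⟩ := Matrix.exists_mulVec_eq_zero_iff.mpr hdet
    exact hv0 (hinj2 (show M.mulVecLin v = M.mulVecLin 0 by simp [hv]))
  · have hinj : Function.Injective M.mulVecLin := by
      intro v w hvw
      by_contra hne
      exact hdet (Matrix.exists_mulVec_eq_zero_iff.mp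
        ⟨v - w, sub_ne_zero.mpr hne, by
          have : M.mulVecLin (v - w) = 0 := by rw [map_sub, hvw, sub_self]
          simpa using this⟩)
    let e : (ι → ℤ) ≃ₗ[ℤ] (LinearMap.range M.mulVecLin) := LinearEquiv.ofInjective _ hinj
    have hcomp : (LinearMap.range M.mulVecLin).subtype ∘ₗ
        (e : (ι → ℤ) →ₗ[ℤ] (LinearMap.range M.mulVecLin)) = M.mulVecLin := by
      ext v j; rfl
    rw [← index_eq_natAbs_det _ e, hcomp]
    rw [show M.mulVecLin = Matrix.toLin' M from (Matrix.toLin'_apply' M).symm,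
      LinearMap.det_toLin']

open Matrix Finset

lemma det_mul_expand {ι E : Type} [Fintype ι] [Fintype E] [DecidableEq ι]
    (A : Matrix ι E ℤ) (Bm : Matrix E ι ℤ) :
    (A * Bm).det = ∑ f : ι → E, (∏ i, A i (f i)) * (Bm.submatrix f id).det := by
  classical
  have h1 : (A * Bm).det
      = Matrix.detRowAlternating (R := ℤ) (n := ι) (fun i => ∑ e, A i e • Bm e) := by
    congr 1
    ext i j
    simp [Matrix.mul_apply, Finset.sum_apply]
  rw [h1]
  erw [(Matrix.detRowAlternating (R := ℤ) (n := ι)).toMultilinearMap.map_sum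
    (fun i (e : E) => A i e • Bm e)]
  refine Finset.sum_congr rfl fun f _ => ?_
  erw [(Matrix.detRowAlternating (R := ℤ) (n := ι)).toMultilinearMap.map_smul_univ
    (fun i => A i (f i)) (fun i => Bm (f i))]
  rw [smul_eq_mul]
  congr 1

lemma cauchy_binet_eval {ι E : Type} [Fintype ι] [Fintype E] [DecidableEq ι] [DecidableEq E]
    (A : Matrix ι E ℤ) (P : Finset E → Prop) [DecidablePred P]
    (hP : ∀ g : ι → E, Function.Injective g →
      (A.submatrix id g).det ^ 2 = if P (Finset.univ.image g) then 1 else 0) :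
    (A * Aᵀ).det =
      ((Finset.univ.powersetCard (Fintype.card ι)).filter P).card := by
  classical
  rw [det_mul_expand]
  rw [← Finset.sum_filter_add_sum_filter_not Finset.univ (fun f : ι → E => Function.Injective f)]
  have h0 : ∑ f ∈ Finset.univ.filter (fun f : ι → E => ¬ Function.Injective f),
      (∏ i, A i (f i)) * ((Aᵀ).submatrix f id).det = 0 := by
    refine Finset.sum_eq_zero fun f hf => ?_
    have hf' := (Finset.mem_filter.mp hf).2
    simp only [Function.Injective] at hf'
    push_neg at hf'
    obtain ⟨i, j, hij, hne⟩ := hf'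
    have : ((Aᵀ).submatrix f id).det = 0 :=
      Matrix.det_zero_of_row_eq hne (by ext k; simp [Matrix.submatrix_apply, hij])
    rw [this, mul_zero]
  rw [h0, add_zero]
  have hmaps : ∀ f ∈ Finset.univ.filter (fun f : ι → E => Function.Injective f),
      Finset.univ.image f ∈ Finset.univ.powersetCard (Fintype.card ι) := by
    intro f hf
    simp only [Finset.mem_filter] at hf
    rw [Finset.mem_powersetCard_univ, Finset.card_image_of_injective _ hf.2,
      Finset.card_univ]
  rw [← Finset.sum_fiberwise_of_maps_to hmaps
    (fun f => (∏ i, A i (f i)) * ((Aᵀ).submatrix f id).det)]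
  have key : ∀ T ∈ Finset.univ.powersetCard (Fintype.card ι),
      (∑ f ∈ (Finset.univ.filter (fun f : ι → E => Function.Injective f)).filter
          (fun f => Finset.univ.image f = T),
        (∏ i, A i (f i)) * ((Aᵀ).submatrix f id).det) = if P T then 1 else 0 := by
    intro T hT
    have hTcard : T.card = Fintype.card ι := (Finset.mem_powersetCard_univ).mp hT
    let eT : ι ≃ T := (Fintype.equivFinOfCardEq hTcard.symm).trans T.equivFin.symm
    set g : ι → E := fun i => (eT i : E) with hg
    have hginj : Function.Injective g := fun a b hab => eT.injective (Subtype.ext hab)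
    have hgim : Finset.univ.image g = T := by
      apply Finset.eq_of_subset_of_card_le
      · intro x hx
        simp only [Finset.mem_image] at hx
        obtain ⟨i, -, rfl⟩ := hx
        exact (eT i).2
      · rw [Finset.card_image_of_injective _ hginj, Finset.card_univ, hTcard]
    have hfib : (Finset.univ.filter (fun f : ι → E => Function.Injective f)).filter
        (fun f => Finset.univ.image f = T)
        = Finset.image (fun σ : Equiv.Perm ι => g ∘ σ) Finset.univ := by
      ext f
      simp only [Finset.mem_filter, Finset.mem_univ, true_and, Finset.mem_image]
      constructor
      · rintro ⟨hfinj, hfim⟩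
        have hmem : ∀ i, f i ∈ T := fun i => hfim ▸ Finset.mem_image_of_mem f (Finset.mem_univ i)
        have hτinj : Function.Injective (fun i => eT.symm ⟨f i, hmem i⟩) := by
          intro a b hab
          have := congrArg (fun x => ((eT x : T) : E)) hab
          simp only [Equiv.apply_symm_apply] at this
          exact hfinj this
        refine ⟨Equiv.ofBijective _ ((Finite.injective_iff_bijective).mp hτinj), ?_⟩
        funext i
        show g (eT.symm ⟨f i, hmem i⟩) = f i
        simp only [g, Equiv.apply_symm_apply]
      · rintro ⟨σ, rfl⟩
        refine ⟨hginj.comp σ.injective, ?_⟩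
        rw [show ((g ∘ σ) : ι → E) = fun i => g (σ i) from rfl]
        rw [← hgim]
        ext x
        simp only [Finset.mem_image, Finset.mem_univ, true_and]
        exact ⟨fun ⟨i, hi⟩ => ⟨σ i, hi⟩, fun ⟨i, hi⟩ => ⟨σ.symm i, by simpa using hi⟩⟩
    rw [hfib, Finset.sum_image (by
      intro x _ y _ hxy
      ext i
      exact hginj (congrFun hxy i))]
    set D : ℤ := (A.submatrix id g).det with hD
    have hterm : ∀ σ : Equiv.Perm ι,
        (∏ i, A i ((g ∘ σ) i)) * ((Aᵀ).submatrix (g ∘ σ) id).det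
        = ((Equiv.Perm.sign σ : ℤ) * ∏ i, A i (g (σ i))) * D := by
      intro σ
      have h1 : (Aᵀ).submatrix (g ∘ σ) id = ((Aᵀ).submatrix g id).submatrix σ id := by
        rw [Matrix.submatrix_submatrix]
        rfl
      have h2 : ((Aᵀ).submatrix g id) = (A.submatrix id g)ᵀ := by
        rw [Matrix.transpose_submatrix]
      rw [h1, Matrix.det_permute, h2, Matrix.det_transpose, ← hD]
      push_cast
      simp only [Function.comp_apply]
      ring
    rw [Finset.sum_congr rfl (fun σ _ => hterm σ), ← Finset.sum_mul]
    have h3 : (∑ σ : Equiv.Perm ι, (Equiv.Perm.sign σ : ℤ) * ∏ i, A i (g (σ i))) = D := by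
      rw [hD, ← Matrix.det_transpose (A.submatrix id g), Matrix.det_apply']
      refine Finset.sum_congr rfl fun σ _ => ?_
      congr 1
    rw [h3, ← sq, hP g hginj, hgim]
  rw [Finset.sum_congr rfl key]
  rw [Finset.sum_boole]

open Matrix Finset

lemma tree_det {γ : ℕ} {E : Type} [Fintype E] [DecidableEq E] (v0 : Fin γ)
    (ε : E → Sym2 (Fin γ)) (t h : E → Fin γ) (hth : ∀ e, s(t e, h e) = ε e)
    (hne : ∀ e, t e ≠ h e) (T : Finset E)
    (gT : {i : Fin γ // i ≠ v0} → E) (hgT : ∀ j, gT j ∈ T)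
    (hsurj : ∀ e ∈ T, ∃ j, gT j = e)
    (M : Matrix {i : Fin γ // i ≠ v0} {i : Fin γ // i ≠ v0} ℤ)
    (hM : ∀ i j, M i j = (if (i : Fin γ) = h (gT j) then 1 else 0)
      - (if (i : Fin γ) = t (gT j) then 1 else 0))
    [Decidable (SimpleGraph.fromRel
        (fun a b : Fin γ => ∃ e ∈ T, ε e = s(a, b))).Connected] :
    M.det ^ 2 = if (SimpleGraph.fromRel
        (fun a b : Fin γ => ∃ e ∈ T, ε e = s(a, b))).Connected then 1 else 0 := by
  classical
  let ι := {i : Fin γ // i ≠ v0}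
  set G := SimpleGraph.fromRel (fun a b : Fin γ => ∃ e ∈ T, ε e = s(a, b)) with hG
  set φ : Fin γ → (ι → ℤ) := fun v => fun i => if (i : Fin γ) = v then 1 else 0 with hφ
  have hcol : ∀ j, Mᵀ j = φ (h (gT j)) - φ (t (gT j)) := by
    intro j
    funext i
    simp only [Matrix.transpose_apply, hM i j, Pi.sub_apply, hφ]
  have hzero0 : φ v0 = 0 := by
    funext i
    simp only [hφ, Pi.zero_apply]
    exact if_neg i.2
  have key : ∀ (a b : Fin γ), G.Walk a b →
      φ a - φ b ∈ Submodule.span ℤ (Set.range Mᵀ) := by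
    intro a b p
    induction p with
    | nil => simp
    | @cons a u b hadj q ih =>
      have hdiff : φ a - φ u ∈ Submodule.span ℤ (Set.range Mᵀ) := by
        rw [hG, SimpleGraph.fromRel_adj] at hadj
        obtain ⟨hvu, hrel⟩ := hadj
        have : ∃ e ∈ T, ε e = s(a, u) := by
          rcases hrel with h1 | h1
          · exact h1
          · obtain ⟨e, he, he2⟩ := h1
            exact ⟨e, he, he2.trans (Sym2.eq_swap)⟩
        obtain ⟨e, heT, heε⟩ := this
        obtain ⟨j, rfl⟩ := hsurj e heT
        have hs : s(t (gT j), h (gT j)) = s(a, u) := (hth (gT j)).trans heε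
        rcases Sym2.eq_iff.mp hs with ⟨h1, h2⟩ | ⟨h1, h2⟩
        · have : φ a - φ u = -(Mᵀ j) := by
            rw [hcol j, h1, h2]; ring
          rw [this]
          exact neg_mem (Submodule.subset_span ⟨j, rfl⟩)
        · have : φ a - φ u = Mᵀ j := by
            rw [hcol j, h1, h2]
          rw [this]
          exact Submodule.subset_span ⟨j, rfl⟩
      have := (Submodule.span ℤ (Set.range Mᵀ)).add_mem hdiff ih
      simpa using this
  split_ifs with hconn
  · -- connected case
    have hκ : ∀ v : Fin γ, φ v ∈ Submodule.span ℤ (Set.range Mᵀ) := by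
      intro v
      obtain ⟨p⟩ := hconn.preconnected v v0
      have := key v v0 p
      rwa [hzero0, sub_zero] at this
    have htop : Submodule.span ℤ (Set.range Mᵀ) = ⊤ := by
      rw [Submodule.eq_top_iff']
      intro x
      rw [pi_eq_sum_univ x]
      refine Submodule.sum_mem _ fun i _ => Submodule.smul_mem _ _ ?_
      have : (fun j : ι => if i = j then (1 : ℤ) else 0) = φ (i : Fin γ) := by
        funext j
        simp only [hφ]
        by_cases hij : i = j
        · subst hij; simp
        · rw [if_neg hij, if_neg (fun hh => hij (Subtype.ext hh.symm))]
      rw [this]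
      exact hκ _
    have hsurjlin : Function.Surjective M.mulVecLin := by
      rw [← LinearMap.range_eq_top, Matrix.range_mulVecLin]; exact htop
    have hinj := IsNoetherian.injective_of_surjective_endomorphism _ hsurjlin
    have hunit : IsUnit (LinearMap.det M.mulVecLin) :=
      (LinearEquiv.ofBijective M.mulVecLin ⟨hinj, hsurjlin⟩).isUnit_det'
    rw [← Matrix.toLin'_apply', LinearMap.det_toLin'] at hunit
    rcases Int.isUnit_iff.mp hunit with h1 | h1 <;> rw [h1] <;> norm_num
  · -- disconnected case
    have hne' : Nonempty (Fin γ) := ⟨v0⟩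
    have hpre : ¬ G.Preconnected := fun hp => hconn ⟨hp⟩
    have hu : ∃ u, ¬ G.Reachable u v0 := by
      by_contra hcon
      push_neg at hcon
      exact hpre fun a b => (hcon a).trans (hcon b).symm
    obtain ⟨u, hu⟩ := hu
    have huv0 : u ≠ v0 := fun he => hu (he ▸ SimpleGraph.Reachable.refl u)
    set x : ι → ℤ := fun i => if G.Reachable (i : Fin γ) u then 1 else 0 with hx
    have hx0 : x ≠ 0 := by
      intro hzero
      have := congrFun hzero ⟨u, huv0⟩
      simp only [hx, Pi.zero_apply] at this
      rw [if_pos (SimpleGraph.Reachable.refl u)] at this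
      exact one_ne_zero this
    have hχ : ∀ v : Fin γ, (∑ i : ι, x i * (if (i : Fin γ) = v then 1 else 0))
        = if (v ≠ v0 ∧ G.Reachable v u) then 1 else 0 := by
      intro v
      by_cases hv : v = v0
      · subst hv
        rw [if_neg (by simp)]
        exact Finset.sum_eq_zero fun i _ => by rw [if_neg i.2, mul_zero]
      · rw [Finset.sum_eq_single ⟨v, hv⟩ (fun i _ hi => by
            rw [if_neg (fun hh => hi (Subtype.ext hh)), mul_zero])
          (fun habs => absurd (Finset.mem_univ _) habs)]
        rw [if_pos rfl, mul_one]
        by_cases hr : G.Reachable v u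
        · rw [if_pos ⟨hv, hr⟩]; simp [hx, hr]
        · rw [if_neg (fun hh => hr hh.2)]; simp [hx, hr]
    have hvm : x ᵥ* M = 0 := by
      funext j
      have expand : (x ᵥ* M) j = ∑ i : ι, x i * M i j := by
        simp [Matrix.vecMul, dotProduct]
      rw [expand]
      have : ∀ i : ι, x i * M i j
          = x i * (if (i : Fin γ) = h (gT j) then 1 else 0)
            - x i * (if (i : Fin γ) = t (gT j) then 1 else 0) := by
        intro i; rw [hM i j]; ring
      rw [Finset.sum_congr rfl fun i _ => this i, Finset.sum_sub_distrib, hχ, hχ]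
      have hadj : G.Adj (t (gT j)) (h (gT j)) := by
        rw [hG, SimpleGraph.fromRel_adj]
        exact ⟨hne (gT j), Or.inl ⟨gT j, hgT j, (hth (gT j)).symm⟩⟩
      by_cases hr : G.Reachable (t (gT j)) u
      · have hr2 : G.Reachable (h (gT j)) u := hadj.symm.reachable.trans hr
        have h1 : t (gT j) ≠ v0 := by
          intro hh; rw [hh] at hr; exact hu hr.symm
        have h2 : h (gT j) ≠ v0 := by
          intro hh; rw [hh] at hr2; exact hu hr2.symm
        rw [if_pos ⟨h2, hr2⟩, if_pos ⟨h1, hr⟩]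
        simp
      · have hr2 : ¬ G.Reachable (h (gT j)) u := fun hh => hr (hadj.reachable.trans hh)
        rw [if_neg (fun hh => hr2 hh.2), if_neg (fun hh => hr hh.2)]
        simp
    have hdet : M.det = 0 := Matrix.exists_vecMul_eq_zero_iff.mp ⟨x, hx0, hvm⟩
    rw [hdet]
    norm_num

set_option maxHeartbeats 1000000 in
/-- Kirchhoff–Trent / matrix-tree for the degree class group:
Model a finite connected loopless multigraph on vertices `Fin γ` by a finite edge
type `E` and an endpoint map `ε : E → Sym2 (Fin γ)` avoiding diagonal elements.
Let `m i j = #{e : ε e = s(i,j)}`, let `c i` be the columns of the negative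
Laplacian, `Z = {d ∈ ℤ^γ : ∑ d_j = 0}`, `Λ = ⟨columns⟩`, `Δ = Z/Λ`.
A spanning tree is a set `T` of `γ - 1` edges whose subgraph is connected.
Then `|Δ|` equals the number of spanning trees of the graph. -/
theorem degree_class_group_card_eq_spanning_trees
    (γ : ℕ) (hγ : 1 ≤ γ) (E : Type) [Fintype E]
    (ε : E → Sym2 (Fin γ))
    (hloop : ∀ e, ¬ (ε e).IsDiag)
    (hconn : (SimpleGraph.fromRel (fun i j : Fin γ => ∃ e, ε e = s(i, j))).Connected)
    (m : Fin γ → Fin γ → ℕ)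
    (hm : ∀ i j : Fin γ, m i j = Nat.card {e : E // ε e = s(i, j)})
    (c : Fin γ → (Fin γ → ℤ))
    (hc : ∀ i j : Fin γ, c i j =
      if j = i then -∑ l ∈ Finset.univ.erase i, (m i l : ℤ) else (m j i : ℤ))
    (Zsub : AddSubgroup (Fin γ → ℤ))
    (hZ : Zsub = (AddMonoidHom.mk' (fun v : Fin γ → ℤ => ∑ j, v j)
      (by intro a b; simp [Finset.sum_add_distrib])).ker)
    (Λ : AddSubgroup (Fin γ → ℤ))
    (hΛ : Λ = AddSubgroup.closure (Set.range c)) :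
    Nat.card (↥Zsub ⧸ Λ.addSubgroupOf Zsub) =
      Nat.card {T : Finset E // T.card = γ - 1 ∧
        (SimpleGraph.fromRel (fun i j : Fin γ => ∃ e ∈ T, ε e = s(i, j))).Connected} := by
  classical
  set v0 : Fin γ := ⟨0, hγ⟩ with hv0
  -- orientation of edges
  have hex : ∀ e, ∃ x y : Fin γ, s(x, y) = ε e := by
    intro e
    induction ε e using Sym2.ind with
    | _ x y => exact ⟨x, y, rfl⟩
  choose t h hth using hex
  have hne : ∀ e, t e ≠ h e := by
    intro e he
    exact hloop e (by rw [← hth e, he]; exact Sym2.mk_isDiag_iff.mpr rfl)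
  -- m as a filter cardinality
  have hmcard : ∀ i j, (m i j : ℤ)
      = ((Finset.univ.filter (fun e => ε e = s(i, j))).card : ℤ) := by
    intro i j
    rw [hm i j, Nat.card_eq_fintype_card, Fintype.card_subtype]
  have msymm : ∀ i j, m i j = m j i := by
    intro i j
    rw [hm i j, hm j i]
    have : s(i, j) = s(j, i) := Sym2.eq_swap
    rw [this]
  -- incidence entries
  set B : Fin γ → E → ℤ :=
    fun v e => (if v = h e then 1 else 0) - (if v = t e then 1 else 0) with hB
  have hBsum : ∀ e, ∑ v, B v e = 0 := by
    intro e
    simp only [hB, Finset.sum_sub_distrib]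
    rw [Finset.sum_ite_eq' Finset.univ (h e) (fun _ => (1 : ℤ)),
      Finset.sum_ite_eq' Finset.univ (t e) (fun _ => (1 : ℤ))]
    simp
  have hF1 : ∀ i j : Fin γ, i ≠ j → ∑ e, B i e * B j e = -(m i j : ℤ) := by
    intro i j hij
    have hterm : ∀ e, B i e * B j e = if ε e = s(i, j) then (-1 : ℤ) else 0 := by
      intro e
      by_cases hε : ε e = s(i, j)
      · rw [if_pos hε]
        have hs : s(t e, h e) = s(i, j) := (hth e).trans hε
        rcases Sym2.eq_iff.mp hs with ⟨h1, h2⟩ | ⟨h1, h2⟩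
        · simp [hB, h1, h2, hij, Ne.symm hij]
        · simp [hB, h1, h2, hij, Ne.symm hij]
      · rw [if_neg hε]
        have hBz : ∀ v : Fin γ, B v e ≠ 0 → v = h e ∨ v = t e := by
          intro v hv
          by_contra hcon
          push_neg at hcon
          simp [hB, hcon.1, hcon.2] at hv
        rcases eq_or_ne (B i e) 0 with hz | hz
        · rw [hz, zero_mul]
        rcases eq_or_ne (B j e) 0 with hz2 | hz2
        · rw [hz2, mul_zero]
        exfalso
        rcases hBz i hz with h1 | h1 <;> rcases hBz j hz2 with h2 | h2
        · exact hij (h1.trans h2.symm)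
        · exact hε (by rw [← hth e, h1, h2, Sym2.eq_swap])
        · exact hε (by rw [← hth e, h1, h2])
        · exact hij (h1.trans h2.symm)
    rw [Finset.sum_congr rfl (fun e _ => hterm e), Finset.sum_ite, Finset.sum_const,
      Finset.sum_const_zero, add_zero, hmcard]
    push_cast
    ring
  have hF2 : ∀ i : Fin γ, ∑ e, B i e * B i e
      = ∑ l ∈ Finset.univ.erase i, (m i l : ℤ) := by
    intro i
    have hrow : ∀ e, B i e = -∑ v ∈ Finset.univ.erase i, B v e := by
      intro e
      have h0 := hBsum e
      rw [← Finset.add_sum_erase Finset.univ (fun v => B v e) (Finset.mem_univ i)] at h0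
      linarith
    have hstep : ∀ e, B i e * B i e = ∑ v ∈ Finset.univ.erase i, -(B i e * B v e) := by
      intro e
      nth_rewrite 2 [hrow e]
      rw [mul_neg, Finset.mul_sum, ← Finset.sum_neg_distrib]
    rw [Finset.sum_congr rfl (fun e _ => hstep e), Finset.sum_comm]
    refine Finset.sum_congr rfl fun v hv => ?_
    have hvi : i ≠ v := Ne.symm (Finset.mem_erase.mp hv).1
    rw [Finset.sum_neg_distrib, hF1 i v hvi, neg_neg]
  -- reduced incidence matrix
  set A : Matrix {i : Fin γ // i ≠ v0} E ℤ := fun i e => B (i : Fin γ) e with hA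
  have hAA : ∀ i j : {i : Fin γ // i ≠ v0},
      (A * Aᵀ) i j = - c (j : Fin γ) (i : Fin γ) := by
    intro i j
    rw [Matrix.mul_apply]
    simp only [Matrix.transpose_apply]
    simp only [hA]
    by_cases hij : i = j
    · subst hij
      rw [hF2 (i : Fin γ), hc (i : Fin γ) (i : Fin γ), if_pos rfl, neg_neg]
    · have hij' : (i : Fin γ) ≠ (j : Fin γ) := fun hh => hij (Subtype.ext hh)
      rw [hF1 _ _ hij', hc (j : Fin γ) (i : Fin γ), if_neg hij']
  set Mred : Matrix {i : Fin γ // i ≠ v0} {i : Fin γ // i ≠ v0} ℤ :=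
    fun i j => c (j : Fin γ) (i : Fin γ) with hMred
  have hMredneg : Mred = -(A * Aᵀ) := by
    ext i j
    rw [Matrix.neg_apply, hAA i j, neg_neg]
  -- column/row sums of c
  have hcolsum : ∀ k, ∑ v, c v k = 0 := by
    intro k
    have hterm : ∀ v ∈ Finset.univ.erase k, c v k = (m k v : ℤ) := by
      intro v hv
      rw [hc v k, if_neg (Ne.symm (Finset.mem_erase.mp hv).1)]
    rw [← Finset.add_sum_erase Finset.univ (fun v => c v k) (Finset.mem_univ k),
      hc k k, if_pos rfl, Finset.sum_congr rfl hterm]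
    exact neg_add_cancel _
  have hrowsum : ∀ v, ∑ j, c v j = 0 := by
    intro v
    have hterm : ∀ j ∈ Finset.univ.erase v, c v j = (m v j : ℤ) := by
      intro j hj
      rw [hc v j, if_neg (Finset.mem_erase.mp hj).1]
      exact_mod_cast congrArg (Nat.cast : ℕ → ℤ) (msymm j v)
    rw [← Finset.add_sum_erase Finset.univ (fun j => c v j) (Finset.mem_univ v),
      hc v v, if_pos rfl, Finset.sum_congr rfl hterm]
    exact neg_add_cancel _
  have hmemZ : ∀ d : Fin γ → ℤ, d ∈ Zsub ↔ ∑ j, d j = 0 := by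
    intro d
    rw [hZ]
    simp [AddMonoidHom.mem_ker]
  have hcZ : ∀ v, c v ∈ Zsub := fun v => (hmemZ _).mpr (hrowsum v)
  -- splitting sums at v0
  have hsplit : ∀ d : Fin γ → ℤ,
      ∑ j, d j = d v0 + ∑ i : {i : Fin γ // i ≠ v0}, d (i : Fin γ) := by
    intro d
    rw [← Finset.add_sum_erase Finset.univ d (Finset.mem_univ v0)]
    congr 1
    exact Finset.sum_subtype (Finset.univ.erase v0)
      (by intro x; simp [Finset.mem_erase]) d
  -- restriction hom
  set res : (Fin γ → ℤ) →+ ({i : Fin γ // i ≠ v0} → ℤ) :=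
    AddMonoidHom.mk' (fun d => fun i => d (i : Fin γ)) (fun a b => rfl) with hres
  -- the isomorphism ψ
  set ψ : Zsub ≃+ ({i : Fin γ // i ≠ v0} → ℤ) :=
    { toFun := fun d => res d.1
      invFun := fun x => ⟨fun v => if hv : v = v0 then -∑ i, x i else x ⟨v, hv⟩,
        (hmemZ _).mpr (by
          rw [hsplit, dif_pos rfl,
            Finset.sum_congr rfl (f := fun i : {i : Fin γ // i ≠ v0} => if hv : (i : Fin γ) = v0 then -∑ i, x i else x ⟨(i : Fin γ), hv⟩)
              (fun i (_ : i ∈ Finset.univ) => dif_neg i.2)]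
          ring)⟩
      left_inv := by
        intro d
        apply Subtype.ext
        funext v
        show (if hv : v = v0 then -∑ i : {i : Fin γ // i ≠ v0}, (res d.1) i
            else (res d.1) ⟨v, hv⟩) = d.1 v
        by_cases hv : v = v0
        · subst hv
          rw [dif_pos rfl]
          have h0 := (hmemZ d.1).mp d.2
          rw [hsplit] at h0
          have h1 : ∑ i : {i : Fin γ // i ≠ v0}, (res d.1) i
              = ∑ i : {i : Fin γ // i ≠ v0}, d.1 (i : Fin γ) := rfl
          rw [h1]
          linarith
        · rw [dif_neg hv]
          rfl
      right_inv := by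
        intro x
        funext i
        show (if hv : (i : Fin γ) = v0 then -∑ i, x i else x ⟨(i : Fin γ), hv⟩) = x i
        rw [dif_neg i.2]
      map_add' := fun a b => rfl } with hψ
  -- image of the lattice
  have hmap : AddSubgroup.map (ψ : Zsub ≃+ ({i : Fin γ // i ≠ v0} → ℤ))
      (Λ.addSubgroupOf Zsub) = (Submodule.span ℤ (Set.range Mredᵀ)).toAddSubgroup := by
    rw [Submodule.span_int_eq_addSubgroupClosure]
    apply le_antisymm
    · rw [AddSubgroup.map_le_iff_le_comap]
      intro d hd
      rw [AddSubgroup.mem_addSubgroupOf] at hd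
      rw [AddSubgroup.mem_comap]
      have hgen : Λ ≤ (AddSubgroup.closure (Set.range Mredᵀ)).comap res := by
        rw [hΛ]
        refine (AddSubgroup.closure_le _).mpr ?_
        rintro _ ⟨v, rfl⟩
        rw [SetLike.mem_coe, AddSubgroup.mem_comap]
        by_cases hv : v = v0
        · subst hv
          have hcv0 : c v0 = -∑ w ∈ Finset.univ.erase v0, c w := by
            funext k
            have h0 := hcolsum k
            rw [← Finset.add_sum_erase Finset.univ (fun v => c v k)
              (Finset.mem_univ v0)] at h0
            have : (-∑ w ∈ Finset.univ.erase v0, c w) k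
                = -∑ w ∈ Finset.univ.erase v0, c w k := by
              simp [Finset.sum_apply]
            rw [this]
            linarith
          rw [hcv0, map_neg, map_sum]
          refine neg_mem (AddSubgroup.sum_mem _ fun w hw => ?_)
          exact AddSubgroup.subset_closure
            ⟨⟨w, (Finset.mem_erase.mp hw).1⟩, by funext k; rfl⟩
        · exact AddSubgroup.subset_closure ⟨⟨v, hv⟩, by funext k; rfl⟩
      exact hgen hd
    · refine (AddSubgroup.closure_le _).mpr ?_
      rintro _ ⟨j, rfl⟩
      refine ⟨⟨c (j : Fin γ), hcZ _⟩, ?_, ?_⟩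
      · rw [SetLike.mem_coe, AddSubgroup.mem_addSubgroupOf, hΛ]
        exact AddSubgroup.subset_closure ⟨(j : Fin γ), rfl⟩
      · funext k
        rfl
  have hquot := QuotientAddGroup.congr (Λ.addSubgroupOf Zsub)
    ((Submodule.span ℤ (Set.range Mredᵀ)).toAddSubgroup) ψ hmap
  rw [Nat.card_congr hquot.toEquiv]
  have hidx : Nat.card (({i : Fin γ // i ≠ v0} → ℤ)
      ⧸ (Submodule.span ℤ (Set.range Mredᵀ)).toAddSubgroup)
      = (Submodule.span ℤ (Set.range Mredᵀ)).toAddSubgroup.index := rfl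
  rw [hidx, index_span_cols Mred]
  -- determinant computation
  have hdetneg : Mred.det.natAbs = ((A * Aᵀ).det).natAbs := by
    rw [hMredneg, Matrix.det_neg, Int.natAbs_mul, Int.natAbs_pow]
    simp
  rw [hdetneg]
  -- the spanning tree count
  set P : Finset E → Prop := fun T =>
    (SimpleGraph.fromRel (fun i j : Fin γ => ∃ e ∈ T, ε e = s(i, j))).Connected with hP
  letI : DecidablePred P := Classical.decPred _
  have hPtree : ∀ g : {i : Fin γ // i ≠ v0} → E, Function.Injective g →
      (A.submatrix id g).det ^ 2
        = if P (Finset.univ.image g) then 1 else 0 := by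
    intro g hginj
    exact tree_det v0 ε t h hth hne (Finset.univ.image g) g
      (fun j => Finset.mem_image_of_mem g (Finset.mem_univ j))
      (fun e he => by
        obtain ⟨j, -, rfl⟩ := Finset.mem_image.mp he
        exact ⟨j, rfl⟩)
      (A.submatrix id g) (fun i j => rfl)
  have hcb := cauchy_binet_eval A P hPtree
  have hcard : Fintype.card {i : Fin γ // i ≠ v0} = γ - 1 := by
    have h1 := Fintype.card_subtype_compl (fun i : Fin γ => i = v0)
    simp only [Fintype.card_subtype_eq, Fintype.card_fin] at h1
    exact h1
  have hnat : ((A * Aᵀ).det).natAbs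
      = ((Finset.univ.powersetCard (Fintype.card {i : Fin γ // i ≠ v0})).filter P).card := by
    rw [hcb]
    exact Int.natAbs_natCast _
  rw [hnat, hcard]
  -- identify with Nat.card of the subtype
  have hsets : (Finset.univ.powersetCard (γ - 1)).filter P
      = Finset.univ.filter (fun T : Finset E => T.card = γ - 1 ∧
        (SimpleGraph.fromRel (fun i j : Fin γ => ∃ e ∈ T, ε e = s(i, j))).Connected) := by
    ext T
    simp only [Finset.mem_filter, Finset.mem_powersetCard_univ, Finset.mem_univ, true_and, hP]
  rw [hsets, Nat.card_eq_fintype_card, Fintype.card_subtype]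
end

section
/- Suppose gcd(d − g + 1, 2g − 2) = 1 with g ≥ 2. Then there is no pair of positive integers (w_Z, k_Z) with w_Z + w_{Z'} = 2g − 2, w_Z, w_{Z'} ≥ 1, w_Z ≡ k_Z (mod 2), such that d·w_Z/(2g−2) − k_Z/2 is an integer. Equivalently: if d·w_Z/(2g−2) = n/2 with n ∈ ℤ and n ≡ k_Z (mod 2), and 1 ≤ w_Z ≤ 2g − 3, then gcd(d − g + 1, 2g − 2) > 1. -/
/-! Clearing denominators, `d·w/(2g-2) - k/2 ∈ ℤ` with `k ≡ w (mod 2)` says exactly that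
`2g - 2` divides `(d - g + 1)·w`. Coprimality then forces `2g - 2 ∣ w`, which is impossible
for `0 < w < 2g - 2`. -/

theorem two_mul_dvd_sub_mul_of_div_sub_half_eq_int {c d w k n : ℤ} (hc : c ≠ 0)
    (hwk : 2 ∣ w - k) (h : (d : ℚ) * w / (2 * c) - k / 2 = n) :
    2 * c ∣ (d - c) * w := by
  obtain ⟨m, hm⟩ := hwk
  refine ⟨n - m, ?_⟩
  have hmQ : (w : ℚ) - k = 2 * m := by exact_mod_cast hm
  have hcQ : (c : ℚ) ≠ 0 := by exact_mod_cast hc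
  field_simp at h
  have hQ : ((d - c) * w : ℚ) = 2 * c * (n - m) := by linear_combination h - c * hmQ
  exact_mod_cast hQ

theorem no_integral_basic_inequality_extreme_of_coprime_general
    (g d : ℤ)
    (hcop : Int.gcd (d - g + 1) (2 * g - 2) = 1) :
    ¬ ∃ w k : ℤ, 1 ≤ w ∧ w ≤ 2 * g - 3 ∧ (2 : ℤ) ∣ (w - k) ∧
        ∃ n : ℤ, (d : ℚ) * (w : ℚ) / (2 * (g : ℚ) - 2) - (k : ℚ) / 2 = (n : ℚ) := by
  rintro ⟨w, k, hw1, hw2, hwk, n, hn⟩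
  have hdvd : 2 * g - 2 ∣ (d - g + 1) * w := by
    have := two_mul_dvd_sub_mul_of_div_sub_half_eq_int (c := g - 1) (d := d) (by omega) hwk
      (by rw [← hn]; push_cast; ring)
    convert this using 1 <;> ring
  have hcop' : IsCoprime (2 * g - 2) (d - g + 1) :=
    Int.isCoprime_iff_gcd_eq_one.mpr (by rwa [Int.gcd_comm])
  have hle : 2 * g - 2 ≤ w := Int.le_of_dvd (by omega) (hcop'.dvd_of_dvd_mul_left hdvd)
  omega

/-- Suppose `g ≥ 2` and `gcd(d - g + 1, 2g - 2) = 1`. Then there is no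
pair of integers `(w_Z, k_Z)` with `1 ≤ w_Z ≤ 2g - 3` (so that both `w_Z ≥ 1` and
`w_{Z'} = 2g - 2 - w_Z ≥ 1`) and `w_Z ≡ k_Z (mod 2)` such that
`m_Z(d) = d·w_Z/(2g-2) - k_Z/2` is an integer. -/
theorem no_integral_basic_inequality_extreme_of_coprime
    (g d : ℤ) (hg : 2 ≤ g)
    (hcop : Int.gcd (d - g + 1) (2 * g - 2) = 1) :
    ¬ ∃ w k : ℤ, 1 ≤ w ∧ w ≤ 2 * g - 3 ∧ (2 : ℤ) ∣ (w - k) ∧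
        ∃ n : ℤ, (d : ℚ) * (w : ℚ) / (2 * (g : ℚ) - 2) - (k : ℚ) / 2 = (n : ℚ) :=
  no_integral_basic_inequality_extreme_of_coprime_general g d hcop
end
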